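/- arXiv:2404.05113 — 3 statements merged into one kernel-verified Lean document; each statement's English description precedes it below -/
import Mathlib

section
/- Let R be a root system in ℝ^d with positive system R₊ and fundamental Weyl chamber 𝕎 = {x : ⟨α,x⟩ > 0 for all α ∈ R₊}. Then for any x ∈ 𝕎, ∑_{α ∈ R₊} |α|² / ⟨α,x⟩² = ∑_{α,β ∈ R₊} ⟨α,β⟩ / (⟨α,x⟩⟨β,x⟩). -/
/-!
Write `π y = ∏_{γ ∈ R₊} ⟪γ, y⟫`. The two sides differ by `∑_{α ≠ β} ⟪α, β⟫ / (⟪α, x⟫ ⟪β, x⟫)`,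
which is `F x / π x` for the polynomial `F y = ∑_{α ≠ β} ⟪α, β⟫ ∏_{γ ≠ α, β} ⟪γ, y⟫ = Δπ y` of
degree `|R₊| - 2`. A root reflection `σ_δ` permutes `R₊` up to signs, and the sign changes pair
off under `γ ↦ ±σ_δ γ` except at `δ` itself; hence `F ∘ σ_δ = -F`, so `F` vanishes on the
hyperplane `δ^⊥`. On a generic line through `x`, `F` is then a polynomial of degree
`≤ |R₊| - 2` with `|R₊|` distinct zeros, so `F x = 0`.
-/

open scoped InnerProductSpace

open Finset

variable {E : Type*} [NormedAddCommGroup E] [InnerProductSpace ℝ E]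

section OffDiagSum

variable {ι κ : Type*} [DecidableEq ι] [DecidableEq κ]

noncomputable def offDiagSum (s : Finset ι) (v : ι → E) (y : E) : ℝ :=
  ∑ i ∈ s, ∑ j ∈ s.erase i, ⟪v i, v j⟫_ℝ * ∏ k ∈ (s.erase i).erase j, ⟪v k, y⟫_ℝ

theorem offDiagSum_smul (s : Finset ι) (ε : ι → ℝ) (v : ι → E) (y : E) :
    offDiagSum s (fun i => ε i • v i) y = (∏ i ∈ s, ε i) * offDiagSum s v y := by
  simp only [offDiagSum, mul_sum]
  refine sum_congr rfl fun i hi => sum_congr rfl fun j hj => ?_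
  rw [← mul_prod_erase s ε hi, ← mul_prod_erase _ ε hj]
  simp only [real_inner_smul_left, real_inner_smul_right, prod_mul_distrib]
  ring

theorem offDiagSum_comp {s : Finset ι} {t : Finset κ} {τ : ι → κ} (hτ : Set.BijOn τ s t)
    (v : κ → E) (y : E) : offDiagSum s (v ∘ τ) y = offDiagSum t v y := by
  have herase : ∀ {s : Finset ι} {t : Finset κ}, Set.BijOn τ s t → ∀ i ∈ s,
      Set.BijOn τ (s.erase i) (t.erase (τ i)) := fun hτ i hi => by
    simpa only [coe_erase] using hτ.sdiff_singleton hi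
  refine sum_nbij τ hτ.mapsTo hτ.injOn hτ.surjOn fun i hi => ?_
  have hτi := herase hτ i hi
  refine sum_nbij τ hτi.mapsTo hτi.injOn hτi.surjOn fun j hj => ?_
  have hτij := herase hτi j hj
  exact congrArg _ (prod_nbij τ hτij.mapsTo hτij.injOn hτij.surjOn fun _ _ => rfl)

theorem offDiagSum_comp_linearIsometryEquiv (s : Finset ι) (σ : E ≃ₗᵢ[ℝ] E) (v : ι → E)
    (y : E) : offDiagSum s (σ ∘ v) (σ y) = offDiagSum s v y := by
  simp only [offDiagSum, Function.comp_apply, LinearIsometryEquiv.inner_map_map]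

theorem sum_sum_erase_inner_div_mul_prod (s : Finset ι) (v : ι → E) {x : E}
    (hx : ∀ i ∈ s, ⟪v i, x⟫_ℝ ≠ 0) :
    (∑ i ∈ s, ∑ j ∈ s.erase i, ⟪v i, v j⟫_ℝ / (⟪v i, x⟫_ℝ * ⟪v j, x⟫_ℝ)) *
      ∏ k ∈ s, ⟪v k, x⟫_ℝ = offDiagSum s v x := by
  simp only [offDiagSum, sum_mul]
  refine sum_congr rfl fun i hi => sum_congr rfl fun j hj => ?_
  rw [← mul_prod_erase s _ hi, ← mul_prod_erase _ _ hj]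
  field_simp [hx i hi, hx j (mem_of_mem_erase hj)]

open Polynomial in
theorem exists_natDegree_le_eval_eq_offDiagSum (s : Finset ι) (v : ι → E) (x u : E) :
    ∃ p : ℝ[X], p.natDegree ≤ #s - 2 ∧ ∀ t : ℝ, p.eval t = offDiagSum s v (x + t • u) := by
  refine ⟨∑ i ∈ s, ∑ j ∈ s.erase i, C ⟪v i, v j⟫_ℝ *
      ∏ k ∈ (s.erase i).erase j, (C ⟪v k, u⟫_ℝ * X + C ⟪v k, x⟫_ℝ), ?_, fun t => ?_⟩
  · refine natDegree_sum_le_of_forall_le _ _ fun i hi =>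
      natDegree_sum_le_of_forall_le _ _ fun j hj => (natDegree_C_mul_le _ _).trans ?_
    refine (natDegree_prod_le _ _).trans ((sum_le_card_nsmul _ _ 1 fun _ _ =>
      natDegree_linear_le).trans ?_)
    rw [smul_eq_mul, mul_one, card_erase_of_mem hj, card_erase_of_mem hi, Nat.sub_sub]
  · simp only [offDiagSum, eval_finsetSum, eval_mul, eval_C, eval_prod, eval_add, eval_X,
      inner_add_right, real_inner_smul_right]
    refine sum_congr rfl fun i _ => sum_congr rfl fun j _ => ?_
    congr 1
    exact prod_congr rfl fun k _ => by ring

end OffDiagSum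

theorem exists_forall_inner_ne_zero {W : Finset E} (hW : (0 : E) ∉ W) :
    ∃ u : E, ∀ w ∈ W, ⟪w, u⟫_ℝ ≠ 0 := by
  classical
  have hproper : (⊤ : Submodule ℝ E) ∉ W.image fun w => (ℝ ∙ w)ᗮ := by
    simp only [mem_image, Submodule.orthogonal_eq_top_iff, Submodule.span_singleton_eq_bot]
    rintro ⟨w, hw, rfl⟩
    exact hW hw
  obtain ⟨u, hu⟩ := (Set.ne_univ_iff_exists_notMem _).1
    (Subspace.biUnion_ne_univ_of_top_notMem hproper)
  refine ⟨u, fun w hw h => hu (Set.mem_biUnion (mem_coe.2 (mem_image_of_mem _ hw)) ?_)⟩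
  exact Submodule.mem_orthogonal_singleton_iff_inner_right.2 h

theorem exists_forall_inner_ne_zero_injOn_inner_div {ι : Type*} {s : Finset ι} {v : ι → E}
    (hind : ∀ i ∈ s, ∀ j ∈ s, i ≠ j → LinearIndependent ℝ ![v i, v j]) {x : E}
    (hx : ∀ i ∈ s, ⟪v i, x⟫_ℝ ≠ 0) :
    ∃ u : E, (∀ i ∈ s, ⟪v i, u⟫_ℝ ≠ 0) ∧ Set.InjOn (fun i => ⟪v i, x⟫_ℝ / ⟪v i, u⟫_ℝ) s := by
  classical
  obtain ⟨u, hu⟩ := exists_forall_inner_ne_zero (W := s.image v ∪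
      s.offDiag.image fun p => ⟪v p.1, x⟫_ℝ • v p.2 - ⟪v p.2, x⟫_ℝ • v p.1) <| by
    simp only [mem_union, mem_image, mem_offDiag, not_or, not_exists, not_and]
    refine ⟨fun i hi h => hx i hi (by rw [h, inner_zero_left]), fun ⟨i, j⟩ ⟨hi, hj, hij⟩ h => ?_⟩
    exact hx i hi (LinearIndependent.pair_iff.1 (hind i hi j hj hij) (-⟪v j, x⟫_ℝ) ⟪v i, x⟫_ℝ
      (by rw [← h]; module)).2
  have hvu : ∀ i ∈ s, ⟪v i, u⟫_ℝ ≠ 0 := fun i hi =>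
    hu _ (mem_union_left _ (mem_image_of_mem _ hi))
  refine ⟨u, hvu, fun i hi j hj hij => ?_⟩
  by_contra hne
  have h := hu (⟪v i, x⟫_ℝ • v j - ⟪v j, x⟫_ℝ • v i)
    (mem_union_right _ (mem_image.2 ⟨(i, j), mem_offDiag.2 ⟨hi, hj, hne⟩, rfl⟩))
  rw [div_eq_div_iff (hvu i hi) (hvu j hj)] at hij
  simp only [inner_sub_left, real_inner_smul_left] at h
  exact h (by linarith)

theorem offDiagSum_eq_zero_of_forall_inner_eq_zero {ι : Type*} [DecidableEq ι] {s : Finset ι}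
    {v : ι → E} (hind : ∀ i ∈ s, ∀ j ∈ s, i ≠ j → LinearIndependent ℝ ![v i, v j])
    (hvan : ∀ i ∈ s, ∀ y, ⟪v i, y⟫_ℝ = 0 → offDiagSum s v y = 0)
    {x : E} (hx : ∀ i ∈ s, ⟪v i, x⟫_ℝ ≠ 0) : offDiagSum s v x = 0 := by
  rcases s.eq_empty_or_nonempty with rfl | hs
  · simp [offDiagSum]
  obtain ⟨u, hvu, hinj⟩ := exists_forall_inner_ne_zero_injOn_inner_div hind hx
  set t : ι → ℝ := fun i => -(⟪v i, x⟫_ℝ / ⟪v i, u⟫_ℝ)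
  have hzero : ∀ i ∈ s, ⟪v i, x + t i • u⟫_ℝ = 0 := fun i hi => by
    simp only [t, inner_add_right, real_inner_smul_right]
    field_simp [hvu i hi]
    ring
  obtain ⟨p, hdeg, heval⟩ := exists_natDegree_le_eval_eq_offDiagSum s v x u
  have hp : p = 0 := by
    classical
    refine Polynomial.eq_zero_of_natDegree_lt_card_of_eval_eq_zero' p (s.image t) ?_ ?_
    · simp only [mem_image, forall_exists_index, and_imp]
      rintro _ i hi rfl
      rw [heval]
      exact hvan i hi _ (hzero i hi)
    · rw [card_image_of_injOn (f := t) (neg_injective.comp_injOn hinj)]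
      have := hs.card_pos
      omega
  simpa [hp] using (heval 0).symm

section SignedPermutation

variable {V : Type*} [AddCommGroup V] [DecidableEq V] {S : Finset V}
  {F : Type*} [FunLike F V V] [AddMonoidHomClass F V V] {σ : F}

variable (S) in
def posRep (u : V) : V := if u ∈ S then u else -u

variable (S) in
noncomputable def posSign (u : V) : ℝ := if u ∈ S then 1 else -1

variable (S) in
theorem posSign_smul_posRep [Module ℝ V] (u : V) : posSign S u • posRep S u = u := by
  unfold posSign posRep
  split_ifs <;> simp

theorem posRep_apply_posRep_apply (hS : ∀ γ ∈ S, -γ ∉ S) (hσσ : ∀ u, σ (σ u) = u) {γ : V}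
    (hγ : γ ∈ S) :
    posRep S (σ (posRep S (σ γ))) = γ ∧ posSign S (σ (posRep S (σ γ))) = posSign S (σ γ) := by
  have := hS γ hγ
  unfold posRep posSign
  split_ifs <;> simp_all

theorem bijOn_posRep_apply (hS : ∀ γ ∈ S, -γ ∉ S) (hσS : ∀ γ ∈ S, σ γ ∈ S ∨ -σ γ ∈ S)
    (hσσ : ∀ u, σ (σ u) = u) : Set.BijOn (fun γ => posRep S (σ γ)) S S := by
  have hmaps : Set.MapsTo (fun γ => posRep S (σ γ)) S S := fun γ hγ => by
    show posRep S (σ γ) ∈ S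
    unfold posRep
    split_ifs with h
    exacts [h, (hσS γ hγ).resolve_left h]
  have hinv : Set.LeftInvOn (fun γ => posRep S (σ γ)) (fun γ => posRep S (σ γ)) S :=
    fun γ hγ => (posRep_apply_posRep_apply hS hσσ hγ).1
  exact Set.InvOn.bijOn ⟨hinv, hinv⟩ hmaps hmaps

theorem prod_posSign_apply_eq_neg_one (hS : ∀ γ ∈ S, -γ ∉ S)
    (hσS : ∀ γ ∈ S, σ γ ∈ S ∨ -σ γ ∈ S) (hσσ : ∀ u, σ (σ u) = u) {δ : V} (hδ : δ ∈ S)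
    (hσδ : σ δ = -δ) (hfix : ∀ γ ∈ S, σ γ = -γ → γ = δ) :
    ∏ γ ∈ S, posSign S (σ γ) = -1 := by
  have hδδ : posRep S (σ δ) = δ := by simp [posRep, hσδ, hS δ hδ]
  rw [← mul_prod_erase S _ hδ, show posSign S (σ δ) = -1 by simp [posSign, hσδ, hS δ hδ],
    neg_one_mul, neg_inj]
  -- the factors cancel in pairs `γ, posRep S (σ γ)`; a fixed point with sign `-1` would be `δ`
  refine prod_involution (fun γ _ => posRep S (σ γ)) (fun γ hγ => ?_) (fun γ hγ hne hfixγ => ?_)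
    (fun γ hγ => ?_) (fun γ hγ => (posRep_apply_posRep_apply hS hσσ (mem_of_mem_erase hγ)).1)
  · rw [(posRep_apply_posRep_apply hS hσσ (mem_of_mem_erase hγ)).2]
    unfold posSign
    split_ifs <;> norm_num
  · refine ne_of_mem_erase hγ (hfix γ (mem_of_mem_erase hγ) ?_)
    unfold posSign at hne
    unfold posRep at hfixγ
    split_ifs at hne hfixγ
    · exact absurd rfl hne
    · exact neg_eq_iff_eq_neg.1 hfixγ
  · refine mem_erase.2 ⟨fun h => ne_of_mem_erase hγ ?_,
      (bijOn_posRep_apply hS hσS hσσ).mapsTo (mem_of_mem_erase hγ)⟩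
    rw [← (posRep_apply_posRep_apply hS hσσ (mem_of_mem_erase hγ)).1, h, hδδ]

end SignedPermutation

theorem offDiagSum_apply_eq_neg [DecidableEq E] {S : Finset E} {σ : E ≃ₗᵢ[ℝ] E}
    (hS : ∀ γ ∈ S, -γ ∉ S) (hσS : ∀ γ ∈ S, σ γ ∈ S ∨ -σ γ ∈ S) (hσσ : ∀ u, σ (σ u) = u)
    {δ : E} (hδ : δ ∈ S) (hσδ : σ δ = -δ) (hfix : ∀ γ ∈ S, σ γ = -γ → γ = δ) (y : E) :
    offDiagSum S id (σ y) = -offDiagSum S id y := by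
  have hσ : σ ∘ id = fun γ => posSign S (σ γ) • (id ∘ fun γ => posRep S (σ γ)) γ :=
    funext fun γ => (posSign_smul_posRep S (σ γ)).symm
  calc offDiagSum S id (σ y)
      = offDiagSum S (σ ∘ id) (σ (σ y)) := by rw [offDiagSum_comp_linearIsometryEquiv]
    _ = (∏ γ ∈ S, posSign S (σ γ)) * offDiagSum S id y := by
      rw [hσσ, hσ, offDiagSum_smul, offDiagSum_comp (bijOn_posRep_apply hS hσS hσσ)]
    _ = -offDiagSum S id y := by
      rw [prod_posSign_apply_eq_neg_one hS hσS hσσ hδ hσδ hfix, neg_one_mul]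

theorem reflection_orthogonalComplement_singleton_apply (δ y : E) :
    (ℝ ∙ δ)ᗮ.reflection y = y - (2 * ⟪δ, y⟫_ℝ / ‖δ‖ ^ 2) • δ := by
  rw [Submodule.reflection_orthogonal_apply, Submodule.reflection_singleton_apply,
    RCLike.ofReal_real_eq_id, id]
  module

section RootSystem

variable {R Rpos : Finset E}

theorem eq_of_smul_eq_of_mem_pos
    (hR1 : ∀ α ∈ R, ∀ c : ℝ, c • α ∈ R → c • α = α ∨ c • α = -α)
    (hsub : ∀ α ∈ Rpos, α ∈ R) (hdisj : ∀ α ∈ Rpos, -α ∉ Rpos) {α γ : E} (hα : α ∈ Rpos)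
    (hγ : γ ∈ Rpos) {c : ℝ} (h : c • α = γ) : γ = α := by
  rcases hR1 α (hsub α hα) c (h ▸ hsub γ hγ) with h' | h'
  · rw [← h, h']
  · exact absurd (by rwa [← h, h', neg_neg]) (hdisj γ hγ)

theorem linearIndependent_pair_of_mem_pos
    (hR1 : ∀ α ∈ R, ∀ c : ℝ, c • α ∈ R → c • α = α ∨ c • α = -α)
    (hsub : ∀ α ∈ Rpos, α ∈ R) (hdisj : ∀ α ∈ Rpos, -α ∉ Rpos) {α γ : E} (hα0 : α ≠ 0)
    (hα : α ∈ Rpos) (hγ : γ ∈ Rpos) (hne : α ≠ γ) : LinearIndependent ℝ ![α, γ] :=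
  (LinearIndependent.pair_iff' hα0).2 fun _ h =>
    hne (eq_of_smul_eq_of_mem_pos hR1 hsub hdisj hα hγ h).symm

theorem offDiagSum_eq_zero_of_inner_eq_zero [DecidableEq E]
    (hR1 : ∀ α ∈ R, ∀ c : ℝ, c • α ∈ R → c • α = α ∨ c • α = -α)
    (hR2 : ∀ α ∈ R, ∀ β ∈ R, β - (2 * ⟪α, β⟫_ℝ / ‖α‖ ^ 2) • α ∈ R)
    (hsub : ∀ α ∈ Rpos, α ∈ R) (hdisj : ∀ α ∈ Rpos, -α ∉ Rpos)
    (hunion : ∀ α ∈ R, α ∈ Rpos ∨ -α ∈ Rpos) {δ : E} (hδ : δ ∈ Rpos) {y : E}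
    (hy : ⟪δ, y⟫_ℝ = 0) : offDiagSum Rpos id y = 0 := by
  set σ := (ℝ ∙ δ)ᗮ.reflection
  have hσR : ∀ γ ∈ Rpos, σ γ ∈ Rpos ∨ -σ γ ∈ Rpos := fun γ hγ => by
    refine hunion _ ?_
    rw [reflection_orthogonalComplement_singleton_apply]
    exact hR2 δ (hsub δ hδ) γ (hsub γ hγ)
  have hfix : ∀ γ ∈ Rpos, σ γ = -γ → γ = δ := fun γ hγ h => by
    rw [Submodule.reflection_orthogonal_apply, neg_inj, Submodule.reflection_eq_self_iff,
      Submodule.mem_span_singleton] at h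
    obtain ⟨c, hc⟩ := h
    exact eq_of_smul_eq_of_mem_pos hR1 hsub hdisj hδ hγ hc
  have hσy : σ y = y := Submodule.reflection_mem_subspace_eq_self
    (Submodule.mem_orthogonal_singleton_iff_inner_right.2 hy)
  have h := offDiagSum_apply_eq_neg hdisj hσR (Submodule.reflection_reflection _) hδ
    (Submodule.reflection_orthogonalComplement_singleton_eq_neg δ) hfix y
  rw [hσy] at h
  linarith

end RootSystem

theorem sum_norm_sq_div_eq_double_sum_general {d : ℕ}
    (R Rpos : Finset (EuclideanSpace ℝ (Fin d)))
    (hR1 : ∀ α ∈ R, ∀ c : ℝ, c • α ∈ R → c • α = α ∨ c • α = -α)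
    (hR2 : ∀ α ∈ R, ∀ β ∈ R, β - (2 * ⟪α, β⟫_ℝ / ‖α‖ ^ 2) • α ∈ R)
    (hsub : ∀ α ∈ Rpos, α ∈ R)
    (hdisj : ∀ α ∈ Rpos, -α ∉ Rpos)
    (hunion : ∀ α ∈ R, α ∈ Rpos ∨ -α ∈ Rpos)
    (x : EuclideanSpace ℝ (Fin d))
    (hx : ∀ α ∈ Rpos, 0 < ⟪α, x⟫_ℝ) :
    ∑ α ∈ Rpos, ‖α‖ ^ 2 / ⟪α, x⟫_ℝ ^ 2
      = ∑ α ∈ Rpos, ∑ β ∈ Rpos, ⟪α, β⟫_ℝ / (⟪α, x⟫_ℝ * ⟪β, x⟫_ℝ) := by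
  classical
  have hx0 : ∀ α ∈ Rpos, ⟪α, x⟫_ℝ ≠ 0 := fun α hα => (hx α hα).ne'
  have hF : offDiagSum Rpos id x = 0 :=
    offDiagSum_eq_zero_of_forall_inner_eq_zero
      (fun α hα γ hγ hne => linearIndependent_pair_of_mem_pos hR1 hsub hdisj
        (fun h => hx0 α hα (by rw [h, inner_zero_left])) hα hγ hne)
      (fun δ hδ _ => offDiagSum_eq_zero_of_inner_eq_zero hR1 hR2 hsub hdisj hunion hδ) hx0
  have hoff : ∑ α ∈ Rpos, ∑ β ∈ Rpos.erase α, ⟪α, β⟫_ℝ / (⟪α, x⟫_ℝ * ⟪β, x⟫_ℝ) = 0 := by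
    have h := sum_sum_erase_inner_div_mul_prod Rpos id hx0
    rw [hF] at h
    exact (mul_eq_zero.1 h).resolve_right (prod_ne_zero_iff.2 hx0)
  rw [← add_zero (∑ α ∈ Rpos, _), ← hoff, ← sum_add_distrib]
  refine sum_congr rfl fun α hα => ?_
  rw [← add_sum_erase _ _ hα, real_inner_self_eq_norm_sq]
  ring

/-- For a root system `R` with positive system `R₊` and `x` in the
fundamental Weyl chamber,
`∑_{α ∈ R₊} |α|² / ⟨α,x⟩² = ∑_{α,β ∈ R₊} ⟨α,β⟩ / (⟨α,x⟩⟨β,x⟩)`. -/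
theorem sum_norm_sq_div_eq_double_sum {d : ℕ}
    (R Rpos : Finset (EuclideanSpace ℝ (Fin d)))
    (hR0 : ∀ α ∈ R, α ≠ 0)
    (hR1 : ∀ α ∈ R, ∀ c : ℝ, c • α ∈ R → c • α = α ∨ c • α = -α)
    (hR2 : ∀ α ∈ R, ∀ β ∈ R, β - (2 * ⟪α, β⟫_ℝ / ‖α‖ ^ 2) • α ∈ R)
    (hsub : ∀ α ∈ Rpos, α ∈ R)
    (hdisj : ∀ α ∈ Rpos, -α ∉ Rpos)
    (hunion : ∀ α ∈ R, α ∈ Rpos ∨ -α ∈ Rpos)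
    (hsep : ∃ β : EuclideanSpace ℝ (Fin d), β ∉ R ∧ ∀ α ∈ Rpos, 0 < ⟪β, α⟫_ℝ)
    (x : EuclideanSpace ℝ (Fin d))
    (hx : ∀ α ∈ Rpos, 0 < ⟪α, x⟫_ℝ) :
    ∑ α ∈ Rpos, ‖α‖ ^ 2 / ⟪α, x⟫_ℝ ^ 2
      = ∑ α ∈ Rpos, ∑ β ∈ Rpos, ⟪α, β⟫_ℝ / (⟪α, x⟫_ℝ * ⟪β, x⟫_ℝ) :=
  sum_norm_sq_div_eq_double_sum_general R Rpos hR1 hR2 hsub hdisj hunion x hx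
end

section
/- Let R₊, k, L_k, f_{k,ε} be as above, and let h > 0, x ∈ ℝ^d, and ε₁ > ε₂ > √(h L_k). If y₁ solves y₁ = x + h f_{k,ε₁}(y₁) and y₂ solves y₂ = x + h f_{k,ε₂}(y₂), then |y₁ - y₂| ≤ (1/(1 - h L_k ε₂^{-2})) · (∑_{α ∈ R₊} k(α)|α| / L_k) · (ε₁ - ε₂). -/
open scoped InnerProductSpace BigOperators

private lemma aux_inv_max_eps (t ε₁ ε₂ : ℝ) (h2 : 0 < ε₂) (h12 : ε₂ ≤ ε₁) :
    |1 / max t ε₁ - 1 / max t ε₂| ≤ (ε₁ - ε₂) / ε₂ ^ 2 := by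
  have hm2 : 0 < max t ε₂ := lt_of_lt_of_le h2 (le_max_right _ _)
  have hle : max t ε₂ ≤ max t ε₁ := max_le_max le_rfl h12
  have hm1 : 0 < max t ε₁ := lt_of_lt_of_le hm2 hle
  have hnum : max t ε₁ - max t ε₂ ≤ ε₁ - ε₂ := by
    have : max t ε₁ ≤ ε₁ - ε₂ + max t ε₂ := by
      apply max_le
      · nlinarith [le_max_left t ε₂]
      · nlinarith [le_max_right t ε₂]
    linarith
  rw [abs_sub_comm, abs_of_nonneg (by
    have := one_div_le_one_div_of_le hm2 hle; linarith)]
  have heq : 1 / max t ε₂ - 1 / max t ε₁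
      = (max t ε₁ - max t ε₂) / (max t ε₂ * max t ε₁) := by
    rw [div_sub_div _ _ hm2.ne' hm1.ne', one_mul, mul_one]
  rw [heq]
  apply div_le_div₀ (by linarith) hnum (by positivity)
  have h1 : ε₂ ≤ max t ε₁ := le_trans (le_max_right _ _) hle
  have h2' : ε₂ ≤ max t ε₂ := le_max_right _ _
  nlinarith

private lemma aux_inv_max_lip (s t ε : ℝ) (hε : 0 < ε) :
    |1 / max s ε - 1 / max t ε| ≤ |s - t| / ε ^ 2 := by
  have hms : 0 < max s ε := lt_of_lt_of_le hε (le_max_right _ _)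
  have hmt : 0 < max t ε := lt_of_lt_of_le hε (le_max_right _ _)
  have heq : 1 / max s ε - 1 / max t ε = (max t ε - max s ε) / (max s ε * max t ε) := by
    rw [div_sub_div _ _ hms.ne' hmt.ne', one_mul, mul_one]
  rw [heq, abs_div,
    abs_of_pos (show (0:ℝ) < max s ε * max t ε by positivity)]
  have hnum : |max t ε - max s ε| ≤ |s - t| := by
    rw [abs_sub_comm]; exact (abs_max_sub_max_le_abs s t ε)
  apply div_le_div₀ (abs_nonneg _) hnum (by positivity)
  have h1 : ε ≤ max s ε := le_max_right _ _
  have h2 : ε ≤ max t ε := le_max_right _ _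
  nlinarith

/-- continuity of the implicit solution in the truncation parameter:
if `ε₁ > ε₂ > √(h L_k)` and `yᵢ = x + h f_{k,εᵢ}(yᵢ)`, then
`|y₁ - y₂| ≤ (1/(1 - h L_k ε₂⁻²)) (∑ k(α)|α| / L_k) (ε₁ - ε₂)`. -/
theorem implicit_solution_continuity_in_eps {d : ℕ}
    (Rpos : Finset (EuclideanSpace ℝ (Fin d)))
    (hR0 : ∀ α ∈ Rpos, α ≠ 0)
    (k : EuclideanSpace ℝ (Fin d) → ℝ)
    (hk : ∀ α ∈ Rpos, 0 < k α)
    (h : ℝ) (hh0 : 0 < h)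
    (ε₁ ε₂ : ℝ)
    (hε12 : ε₂ < ε₁)
    (hε2 : Real.sqrt (h * Real.sqrt (Rpos.card * ∑ α ∈ Rpos, k α ^ 2 * ‖α‖ ^ 4)) < ε₂)
    (x y₁ y₂ : EuclideanSpace ℝ (Fin d))
    (hy1 : y₁ = x + h • ∑ α ∈ Rpos, (k α * (1 / max ⟪α, y₁⟫_ℝ ε₁)) • α)
    (hy2 : y₂ = x + h • ∑ α ∈ Rpos, (k α * (1 / max ⟪α, y₂⟫_ℝ ε₂)) • α) :
    ‖y₁ - y₂‖
      ≤ (1 - h * Real.sqrt (Rpos.card * ∑ α ∈ Rpos, k α ^ 2 * ‖α‖ ^ 4) * (ε₂ ^ 2)⁻¹)⁻¹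
          * ((∑ α ∈ Rpos, k α * ‖α‖)
              / Real.sqrt (Rpos.card * ∑ α ∈ Rpos, k α ^ 2 * ‖α‖ ^ 4))
          * (ε₁ - ε₂) := by
  set S : ℝ := ∑ α ∈ Rpos, k α ^ 2 * ‖α‖ ^ 4 with hSdef
  set L : ℝ := Real.sqrt (Rpos.card * S) with hLdef
  set A : ℝ := ∑ α ∈ Rpos, k α * ‖α‖ with hAdef
  have hLnn : 0 ≤ L := Real.sqrt_nonneg _
  have hε2pos : 0 < ε₂ := lt_of_le_of_lt (Real.sqrt_nonneg _) hε2
  have hhL : h * L < ε₂ ^ 2 := by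
    have h1 : 0 ≤ h * L := mul_nonneg hh0.le hLnn
    nlinarith [Real.sq_sqrt h1, Real.sqrt_nonneg (h * L)]
  have hc1 : h * L * (ε₂ ^ 2)⁻¹ < 1 := by
    rw [← div_eq_mul_inv, div_lt_one (by positivity)]; exact hhL
  have hc0 : 0 ≤ h * L * (ε₂ ^ 2)⁻¹ := by positivity
  have hc1' : 0 < 1 - h * L * (ε₂ ^ 2)⁻¹ := by linarith
  rcases Finset.eq_empty_or_nonempty Rpos with hE | hNE
  · subst hE
    simp only [Finset.sum_empty, smul_zero, add_zero] at hy1 hy2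
    rw [hy1, hy2, sub_self, norm_zero]
    have hA0 : A = 0 := by simp [hAdef]
    rw [hA0]
    simp
  -- nonempty case
  have hSpos : 0 < S := by
    apply Finset.sum_pos _ hNE
    intro α hα
    have := hk α hα
    have hα0 : α ≠ 0 := hR0 α hα
    have : 0 < ‖α‖ := norm_pos_iff.mpr hα0
    positivity
  have hLpos : 0 < L := Real.sqrt_pos.mpr (by
    have : (0:ℝ) < Rpos.card := by exact_mod_cast Finset.card_pos.mpr hNE
    positivity)
  have hAnn : 0 ≤ A := Finset.sum_nonneg fun α hα => by
    have := hk α hα; positivity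
  -- Cauchy-Schwarz : ∑ k α * ‖α‖² ≤ L
  have hCS : ∑ α ∈ Rpos, k α * ‖α‖ ^ 2 ≤ L := by
    rw [hLdef, ← Real.sqrt_sq (Finset.sum_nonneg fun α hα => by have := hk α hα; positivity)]
    apply Real.sqrt_le_sqrt
    calc (∑ α ∈ Rpos, k α * ‖α‖ ^ 2) ^ 2
        ≤ Rpos.card * ∑ α ∈ Rpos, (k α * ‖α‖ ^ 2) ^ 2 := sq_sum_le_card_mul_sum_sq
      _ = Rpos.card * S := by
          rw [hSdef]; congr 1; apply Finset.sum_congr rfl; intro α _; ring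
  -- the key fixed-point estimate
  have hkey : ‖y₁ - y₂‖ ≤ h * (A * ((ε₁ - ε₂) / ε₂ ^ 2)) + h * L * (ε₂ ^ 2)⁻¹ * ‖y₁ - y₂‖ := by
    have hdiff : y₁ - y₂ = h • ((∑ α ∈ Rpos, (k α * (1 / max ⟪α, y₁⟫_ℝ ε₁)) • α)
        - (∑ α ∈ Rpos, (k α * (1 / max ⟪α, y₂⟫_ℝ ε₂)) • α)) := by
      rw [smul_sub]
      nth_rewrite 1 [hy1]; nth_rewrite 1 [hy2]
      abel
    have hb1 : ‖(∑ α ∈ Rpos, (k α * (1 / max ⟪α, y₁⟫_ℝ ε₁)) • α)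
        - (∑ α ∈ Rpos, (k α * (1 / max ⟪α, y₁⟫_ℝ ε₂)) • α)‖
        ≤ A * ((ε₁ - ε₂) / ε₂ ^ 2) := by
      rw [← Finset.sum_sub_distrib]
      calc ‖∑ α ∈ Rpos, ((k α * (1 / max ⟪α, y₁⟫_ℝ ε₁)) • α
              - (k α * (1 / max ⟪α, y₁⟫_ℝ ε₂)) • α)‖
          ≤ ∑ α ∈ Rpos, ‖(k α * (1 / max ⟪α, y₁⟫_ℝ ε₁)) • α
              - (k α * (1 / max ⟪α, y₁⟫_ℝ ε₂)) • α‖ := norm_sum_le _ _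
        _ ≤ ∑ α ∈ Rpos, (k α * ‖α‖) * ((ε₁ - ε₂) / ε₂ ^ 2) := by
            apply Finset.sum_le_sum
            intro α hα
            rw [← sub_smul, norm_smul, Real.norm_eq_abs]
            have hka := hk α hα
            have habs : |k α * (1 / max ⟪α, y₁⟫_ℝ ε₁) - k α * (1 / max ⟪α, y₁⟫_ℝ ε₂)|
                ≤ k α * ((ε₁ - ε₂) / ε₂ ^ 2) := by
              rw [← mul_sub, abs_mul, abs_of_pos hka]
              exact mul_le_mul_of_nonneg_left
                (aux_inv_max_eps _ _ _ hε2pos hε12.le) hka.le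
            calc |k α * (1 / max ⟪α, y₁⟫_ℝ ε₁) - k α * (1 / max ⟪α, y₁⟫_ℝ ε₂)| * ‖α‖
                ≤ (k α * ((ε₁ - ε₂) / ε₂ ^ 2)) * ‖α‖ :=
                  mul_le_mul_of_nonneg_right habs (norm_nonneg _)
              _ = (k α * ‖α‖) * ((ε₁ - ε₂) / ε₂ ^ 2) := by ring
        _ = A * ((ε₁ - ε₂) / ε₂ ^ 2) := by rw [hAdef, ← Finset.sum_mul]
    have hb2 : ‖(∑ α ∈ Rpos, (k α * (1 / max ⟪α, y₁⟫_ℝ ε₂)) • α)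
        - (∑ α ∈ Rpos, (k α * (1 / max ⟪α, y₂⟫_ℝ ε₂)) • α)‖
        ≤ (L / ε₂ ^ 2) * ‖y₁ - y₂‖ := by
      rw [← Finset.sum_sub_distrib]
      calc ‖∑ α ∈ Rpos, ((k α * (1 / max ⟪α, y₁⟫_ℝ ε₂)) • α
              - (k α * (1 / max ⟪α, y₂⟫_ℝ ε₂)) • α)‖
          ≤ ∑ α ∈ Rpos, ‖(k α * (1 / max ⟪α, y₁⟫_ℝ ε₂)) • α
              - (k α * (1 / max ⟪α, y₂⟫_ℝ ε₂)) • α‖ := norm_sum_le _ _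
        _ ≤ ∑ α ∈ Rpos, (k α * ‖α‖ ^ 2) * (‖y₁ - y₂‖ / ε₂ ^ 2) := by
            apply Finset.sum_le_sum
            intro α hα
            rw [← sub_smul, norm_smul, Real.norm_eq_abs]
            have hka := hk α hα
            have hinner : |⟪α, y₁⟫_ℝ - ⟪α, y₂⟫_ℝ| ≤ ‖α‖ * ‖y₁ - y₂‖ := by
              rw [← inner_sub_right]
              exact abs_real_inner_le_norm α (y₁ - y₂)
            have habs : |k α * (1 / max ⟪α, y₁⟫_ℝ ε₂) - k α * (1 / max ⟪α, y₂⟫_ℝ ε₂)|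
                ≤ k α * ((‖α‖ * ‖y₁ - y₂‖) / ε₂ ^ 2) := by
              rw [← mul_sub, abs_mul, abs_of_pos hka]
              apply mul_le_mul_of_nonneg_left _ hka.le
              calc |1 / max ⟪α, y₁⟫_ℝ ε₂ - 1 / max ⟪α, y₂⟫_ℝ ε₂|
                  ≤ |⟪α, y₁⟫_ℝ - ⟪α, y₂⟫_ℝ| / ε₂ ^ 2 := aux_inv_max_lip _ _ _ hε2pos
                _ ≤ (‖α‖ * ‖y₁ - y₂‖) / ε₂ ^ 2 :=
                    div_le_div_of_nonneg_right hinner (by positivity)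
            calc |k α * (1 / max ⟪α, y₁⟫_ℝ ε₂) - k α * (1 / max ⟪α, y₂⟫_ℝ ε₂)| * ‖α‖
                ≤ (k α * ((‖α‖ * ‖y₁ - y₂‖) / ε₂ ^ 2)) * ‖α‖ :=
                  mul_le_mul_of_nonneg_right habs (norm_nonneg _)
              _ = (k α * ‖α‖ ^ 2) * (‖y₁ - y₂‖ / ε₂ ^ 2) := by ring
        _ = (∑ α ∈ Rpos, k α * ‖α‖ ^ 2) * (‖y₁ - y₂‖ / ε₂ ^ 2) := by
            rw [← Finset.sum_mul]
        _ ≤ L * (‖y₁ - y₂‖ / ε₂ ^ 2) :=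
            mul_le_mul_of_nonneg_right hCS (by positivity)
        _ = (L / ε₂ ^ 2) * ‖y₁ - y₂‖ := by ring
    have hT : ‖(∑ α ∈ Rpos, (k α * (1 / max ⟪α, y₁⟫_ℝ ε₁)) • α)
        - (∑ α ∈ Rpos, (k α * (1 / max ⟪α, y₂⟫_ℝ ε₂)) • α)‖
        ≤ A * ((ε₁ - ε₂) / ε₂ ^ 2) + (L / ε₂ ^ 2) * ‖y₁ - y₂‖ := by
      have hsplit : (∑ α ∈ Rpos, (k α * (1 / max ⟪α, y₁⟫_ℝ ε₁)) • α)
          - (∑ α ∈ Rpos, (k α * (1 / max ⟪α, y₂⟫_ℝ ε₂)) • α)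
          = ((∑ α ∈ Rpos, (k α * (1 / max ⟪α, y₁⟫_ℝ ε₁)) • α)
              - (∑ α ∈ Rpos, (k α * (1 / max ⟪α, y₁⟫_ℝ ε₂)) • α))
            + ((∑ α ∈ Rpos, (k α * (1 / max ⟪α, y₁⟫_ℝ ε₂)) • α)
              - (∑ α ∈ Rpos, (k α * (1 / max ⟪α, y₂⟫_ℝ ε₂)) • α)) := by abel
      rw [hsplit]
      exact le_trans (norm_add_le _ _) (add_le_add hb1 hb2)
    calc ‖y₁ - y₂‖
        = h * ‖(∑ α ∈ Rpos, (k α * (1 / max ⟪α, y₁⟫_ℝ ε₁)) • α)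
            - (∑ α ∈ Rpos, (k α * (1 / max ⟪α, y₂⟫_ℝ ε₂)) • α)‖ := by
          conv_lhs => rw [hdiff]
          rw [norm_smul, Real.norm_eq_abs, abs_of_pos hh0]
      _ ≤ h * (A * ((ε₁ - ε₂) / ε₂ ^ 2) + (L / ε₂ ^ 2) * ‖y₁ - y₂‖) :=
          mul_le_mul_of_nonneg_left hT hh0.le
      _ = h * (A * ((ε₁ - ε₂) / ε₂ ^ 2)) + h * L * (ε₂ ^ 2)⁻¹ * ‖y₁ - y₂‖ := by
          field_simp
  -- conclude
  have hstep : (1 - h * L * (ε₂ ^ 2)⁻¹) * ‖y₁ - y₂‖ ≤ h * (A * ((ε₁ - ε₂) / ε₂ ^ 2)) := by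
    nlinarith [hkey]
  have h1 : ‖y₁ - y₂‖ ≤ (1 - h * L * (ε₂ ^ 2)⁻¹)⁻¹ * (h * (A * ((ε₁ - ε₂) / ε₂ ^ 2))) := by
    rw [le_inv_mul_iff₀ hc1']
    exact hstep
  apply le_trans h1
  have hX : h * (A * ((ε₁ - ε₂) / ε₂ ^ 2)) ≤ A / L * (ε₁ - ε₂) := by
    have e1 : h * (A * ((ε₁ - ε₂) / ε₂ ^ 2)) = h * A * (ε₁ - ε₂) / ε₂ ^ 2 := by ring
    have e2 : A / L * (ε₁ - ε₂) = A * (ε₁ - ε₂) / L := by ring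
    rw [e1, e2, div_le_div_iff₀ (by positivity) hLpos]
    nlinarith [mul_le_mul_of_nonneg_left hhL.le
      (mul_nonneg hAnn (sub_nonneg.2 hε12.le))]
  calc (1 - h * L * (ε₂ ^ 2)⁻¹)⁻¹ * (h * (A * ((ε₁ - ε₂) / ε₂ ^ 2)))
      ≤ (1 - h * L * (ε₂ ^ 2)⁻¹)⁻¹ * (A / L * (ε₁ - ε₂)) :=
        mul_le_mul_of_nonneg_left hX (inv_nonneg.2 hc1'.le)
    _ = (1 - h * L * (ε₂ ^ 2)⁻¹)⁻¹ * (A / L) * (ε₁ - ε₂) := by ring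
end

section
/- Deterministic discrete Gronwall error bound: Let d, n ∈ ℕ, Δt = T/n > 0, and let g : D → ℝ^d (D ⊆ ℝ^d) satisfy ⟨u - v, g(u) - g(v)⟩ ≤ 0 for all u, v ∈ D, and let b : [0,T] × D → ℝ^d be Lipschitz in space with constant K: |b(t,u) - b(t,v)| ≤ K|u - v|. Suppose two sequences (x_ℓ), (y_ℓ) in D satisfy, for ℓ = 0,…,n-1, x_{ℓ+1} = x_ℓ + ξ_ℓ + (g(x_{ℓ+1}) + b(t_ℓ, x_ℓ))Δt + r_ℓ and y_{ℓ+1} = y_ℓ + ξ_ℓ + (g(y_{ℓ+1}) + b(t_ℓ, y_ℓ))Δt, with x₀ = y₀, where ξ_ℓ ∈ ℝ^d and r_ℓ ∈ ℝ^d. Then with e_ℓ = x_ℓ - y_ℓ, sup_{ℓ=1,…,n} |e_ℓ| ≤ C₀ ∑_{j=0}^{n-1} |r_j|, where C₀ = 2(1 + 2KT e^{2KT}). -/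
open scoped InnerProductSpace BigOperators

/-- deterministic discrete Gronwall error bound for the semi-implicit
Euler scheme with a one-sided Lipschitz drift `g` and Lipschitz-in-space drift `b`. -/
theorem discrete_gronwall_error_bound {d : ℕ} (n : ℕ) (hn : 0 < n)
    (T : ℝ) (hT : 0 < T)
    (D : Set (EuclideanSpace ℝ (Fin d)))
    (g : EuclideanSpace ℝ (Fin d) → EuclideanSpace ℝ (Fin d))
    (b : ℝ → EuclideanSpace ℝ (Fin d) → EuclideanSpace ℝ (Fin d))
    (K : ℝ)
    (hg : ∀ u ∈ D, ∀ v ∈ D, ⟪u - v, g u - g v⟫_ℝ ≤ 0)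
    (hb : ∀ t ∈ Set.Icc (0 : ℝ) T, ∀ u ∈ D, ∀ v ∈ D, ‖b t u - b t v‖ ≤ K * ‖u - v‖)
    (x y : ℕ → EuclideanSpace ℝ (Fin d))
    (hxD : ∀ ℓ, x ℓ ∈ D) (hyD : ∀ ℓ, y ℓ ∈ D)
    (ξ r : ℕ → EuclideanSpace ℝ (Fin d))
    (hx : ∀ ℓ < n, x (ℓ + 1)
      = x ℓ + ξ ℓ + (T / n) • (g (x (ℓ + 1)) + b (ℓ * (T / n)) (x ℓ)) + r ℓ)
    (hy : ∀ ℓ < n, y (ℓ + 1)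
      = y ℓ + ξ ℓ + (T / n) • (g (y (ℓ + 1)) + b (ℓ * (T / n)) (y ℓ)))
    (h0 : x 0 = y 0) :
    ∀ ℓ, 1 ≤ ℓ → ℓ ≤ n →
      ‖x ℓ - y ℓ‖
        ≤ 2 * (1 + 2 * K * T * Real.exp (2 * K * T)) * ∑ j ∈ Finset.range n, ‖r j‖ := by
  have hn' : (0 : ℝ) < n := by exact_mod_cast hn
  have hΔt : (0 : ℝ) < T / n := div_pos hT hn'
  rcases lt_or_ge K 0 with hK | hK
  · -- degenerate case: K < 0 forces D to be a "singleton"-like set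
    have hDeq : ∀ u ∈ D, ∀ v ∈ D, u = v := by
      intro u hu v hv
      have h := hb 0 ⟨le_refl 0, hT.le⟩ u hu v hv
      have h0' : (0 : ℝ) ≤ K * ‖u - v‖ := le_trans (norm_nonneg _) h
      by_contra hne
      have hpos : 0 < ‖u - v‖ := by
        rw [norm_pos_iff]
        exact sub_ne_zero.mpr hne
      nlinarith
    have hr0 : ∀ j < n, r j = 0 := by
      intro j hj
      have e1 := hx j hj
      have e2 := hy j hj
      rw [hDeq (x (j+1)) (hxD _) (y (j+1)) (hyD _),
          hDeq (x j) (hxD _) (y j) (hyD _)] at e1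
      exact left_eq_add.mp (e2.symm.trans e1)
    intro ℓ h1 h2
    have hxy : x ℓ = y ℓ := hDeq _ (hxD _) _ (hyD _)
    have hs : ∑ j ∈ Finset.range n, ‖r j‖ = 0 := by
      apply Finset.sum_eq_zero
      intro j hj
      rw [hr0 j (Finset.mem_range.mp hj), norm_zero]
    rw [hxy, sub_self, norm_zero, hs, mul_zero]
  · -- main case K ≥ 0
    set Δ : ℝ := T / n with hΔdef
    have hbase1 : (1 : ℝ) ≤ 1 + K * Δ := by nlinarith
    have hbase0 : (0 : ℝ) ≤ 1 + K * Δ := by linarith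
    -- one-step estimate
    have key : ∀ ℓ < n, ‖x (ℓ+1) - y (ℓ+1)‖
        ≤ (1 + K * Δ) * ‖x ℓ - y ℓ‖ + ‖r ℓ‖ := by
      intro ℓ hℓ
      have ht : (ℓ : ℝ) * Δ ∈ Set.Icc (0 : ℝ) T := by
        constructor
        · positivity
        · have hℓn : (ℓ : ℝ) ≤ n := by exact_mod_cast hℓ.le
          calc (ℓ : ℝ) * Δ ≤ (n : ℝ) * Δ := by
                apply mul_le_mul_of_nonneg_right hℓn hΔt.le
            _ = T := by rw [hΔdef]; field_simp [hn'.ne']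
      have hE : x (ℓ+1) - y (ℓ+1)
          = (x ℓ - y ℓ) + Δ • (g (x (ℓ+1)) - g (y (ℓ+1)))
            + Δ • (b ((ℓ : ℝ) * Δ) (x ℓ) - b ((ℓ : ℝ) * Δ) (y ℓ)) + r ℓ := by
        conv_lhs => rw [hx ℓ hℓ, hy ℓ hℓ]
        simp only [smul_add, smul_sub]
        abel
      set E := x (ℓ+1) - y (ℓ+1) with hEdef
      have h1 : ⟪E, x ℓ - y ℓ⟫_ℝ ≤ ‖E‖ * ‖x ℓ - y ℓ‖ := real_inner_le_norm _ _
      have h2 : ⟪E, g (x (ℓ+1)) - g (y (ℓ+1))⟫_ℝ ≤ 0 :=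
        hg _ (hxD _) _ (hyD _)
      have h3 : ⟪E, b ((ℓ : ℝ) * Δ) (x ℓ) - b ((ℓ : ℝ) * Δ) (y ℓ)⟫_ℝ
          ≤ ‖E‖ * (K * ‖x ℓ - y ℓ‖) := by
        calc ⟪E, b ((ℓ : ℝ) * Δ) (x ℓ) - b ((ℓ : ℝ) * Δ) (y ℓ)⟫_ℝ
            ≤ ‖E‖ * ‖b ((ℓ : ℝ) * Δ) (x ℓ) - b ((ℓ : ℝ) * Δ) (y ℓ)‖ :=
              real_inner_le_norm _ _
          _ ≤ ‖E‖ * (K * ‖x ℓ - y ℓ‖) :=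
              mul_le_mul_of_nonneg_left (hb _ ht _ (hxD _) _ (hyD _)) (norm_nonneg _)
      have h4 : ⟪E, r ℓ⟫_ℝ ≤ ‖E‖ * ‖r ℓ‖ := real_inner_le_norm _ _
      have hEE : ‖E‖ ^ 2
          = ⟪E, x ℓ - y ℓ⟫_ℝ + Δ * ⟪E, g (x (ℓ+1)) - g (y (ℓ+1))⟫_ℝ
            + Δ * ⟪E, b ((ℓ : ℝ) * Δ) (x ℓ) - b ((ℓ : ℝ) * Δ) (y ℓ)⟫_ℝ
            + ⟪E, r ℓ⟫_ℝ := by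
        conv_lhs => rw [← real_inner_self_eq_norm_sq]
        nth_rewrite 2 [hE]
        rw [inner_add_right, inner_add_right, inner_add_right,
          real_inner_smul_right, real_inner_smul_right]
      have hsq : ‖E‖ ^ 2 ≤ ‖E‖ * ((1 + K * Δ) * ‖x ℓ - y ℓ‖ + ‖r ℓ‖) := by
        have h2' : Δ * ⟪E, g (x (ℓ+1)) - g (y (ℓ+1))⟫_ℝ ≤ 0 :=
          mul_nonpos_of_nonneg_of_nonpos hΔt.le h2
        have h3' : Δ * ⟪E, b ((ℓ : ℝ) * Δ) (x ℓ) - b ((ℓ : ℝ) * Δ) (y ℓ)⟫_ℝ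
            ≤ Δ * (‖E‖ * (K * ‖x ℓ - y ℓ‖)) :=
          mul_le_mul_of_nonneg_left h3 hΔt.le
        nlinarith [hEE, h1, h4]
      rcases eq_or_lt_of_le (norm_nonneg E) with hE0 | hE0
      · rw [← hE0]
        positivity
      · nlinarith [hsq]
    -- discrete Gronwall by induction
    have main : ∀ m, m ≤ n → ‖x m - y m‖
        ≤ (1 + K * Δ) ^ m * ∑ j ∈ Finset.range m, ‖r j‖ := by
      intro m
      induction m with
      | zero => intro _; simp [h0]
      | succ m ih =>
        intro hm
        have hm' : m < n := Nat.lt_of_succ_le hm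
        have ihm := ih hm'.le
        have hpow1 : (1 : ℝ) ≤ (1 + K * Δ) ^ (m + 1) := by
          calc (1:ℝ) = 1 ^ (m+1) := by norm_num
            _ ≤ (1 + K * Δ) ^ (m+1) := pow_le_pow_left₀ (by norm_num) hbase1 _
        calc ‖x (m+1) - y (m+1)‖
            ≤ (1 + K * Δ) * ‖x m - y m‖ + ‖r m‖ := key m hm'
          _ ≤ (1 + K * Δ) * ((1 + K * Δ) ^ m * ∑ j ∈ Finset.range m, ‖r j‖) + ‖r m‖ := by
              gcongr
          _ ≤ (1 + K * Δ) ^ (m+1) * ∑ j ∈ Finset.range m, ‖r j‖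
              + (1 + K * Δ) ^ (m+1) * ‖r m‖ := by
              have he : (1 + K * Δ) * ((1 + K * Δ) ^ m * ∑ j ∈ Finset.range m, ‖r j‖)
                  = (1 + K * Δ) ^ (m+1) * ∑ j ∈ Finset.range m, ‖r j‖ := by ring
              have hr : ‖r m‖ ≤ (1 + K * Δ) ^ (m+1) * ‖r m‖ :=
                le_mul_of_one_le_left (norm_nonneg _) hpow1
              linarith
          _ = (1 + K * Δ) ^ (m+1) * ∑ j ∈ Finset.range (m+1), ‖r j‖ := by
              rw [Finset.sum_range_succ]; ring
    intro ℓ h1 h2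
    have Snn : (0 : ℝ) ≤ ∑ j ∈ Finset.range n, ‖r j‖ :=
      Finset.sum_nonneg fun j _ => norm_nonneg _
    have hSmono : ∑ j ∈ Finset.range ℓ, ‖r j‖ ≤ ∑ j ∈ Finset.range n, ‖r j‖ :=
      Finset.sum_le_sum_of_subset_of_nonneg
        (Finset.range_subset_range.mpr h2) (fun j _ _ => norm_nonneg _)
    have hpowmono : (1 + K * Δ) ^ ℓ ≤ (1 + K * Δ) ^ n :=
      pow_le_pow_right₀ hbase1 h2
    have hexp : (1 + K * Δ) ^ n ≤ Real.exp (K * T) := by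
      have h1' : 1 + K * Δ ≤ Real.exp (K * Δ) := by
        have := Real.add_one_le_exp (K * Δ); linarith
      calc (1 + K * Δ) ^ n ≤ Real.exp (K * Δ) ^ n :=
            pow_le_pow_left₀ hbase0 h1' n
        _ = Real.exp ((n : ℝ) * (K * Δ)) := by rw [← Real.exp_nat_mul]
        _ = Real.exp (K * T) := by
            congr 1
            rw [hΔdef]
            field_simp [hn'.ne']
    have hexp2 : Real.exp (K * T) ≤ Real.exp (2 * K * T) := by
      apply Real.exp_le_exp.mpr
      nlinarith [mul_nonneg hK hT.le]
    have hfinal : Real.exp (2 * K * T) ≤ 1 + 2 * K * T * Real.exp (2 * K * T) := by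
      set s := 2 * K * T with hs
      have hs0 : 0 ≤ s := by positivity
      have h := mul_le_mul_of_nonneg_right (Real.add_one_le_exp (-s)) (Real.exp_pos s).le
      rw [← Real.exp_add] at h
      simp at h
      nlinarith [Real.exp_pos s]
    have hCnn : (0 : ℝ) ≤ 1 + 2 * K * T * Real.exp (2 * K * T) := by positivity
    calc ‖x ℓ - y ℓ‖
        ≤ (1 + K * Δ) ^ ℓ * ∑ j ∈ Finset.range ℓ, ‖r j‖ := main ℓ h2
      _ ≤ (1 + K * Δ) ^ n * ∑ j ∈ Finset.range n, ‖r j‖ := by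
          apply mul_le_mul hpowmono hSmono
            (Finset.sum_nonneg fun j _ => norm_nonneg _) (by positivity)
      _ ≤ Real.exp (2 * K * T) * ∑ j ∈ Finset.range n, ‖r j‖ := by
          apply mul_le_mul_of_nonneg_right (le_trans hexp hexp2) Snn
      _ ≤ (1 + 2 * K * T * Real.exp (2 * K * T)) * ∑ j ∈ Finset.range n, ‖r j‖ := by
          apply mul_le_mul_of_nonneg_right hfinal Snn
      _ ≤ 2 * (1 + 2 * K * T * Real.exp (2 * K * T)) * ∑ j ∈ Finset.range n, ‖r j‖ := by
          have := mul_nonneg hCnn Snn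
          linarith
end
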